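/- Let G be a strongly connected finite directed graph on n ≥ 2 vertices and let x ≥ 0. For a vertex v, if there exists d ≥ 0 such that (n−1)/(f_d(v) − γ̃_{d+1}(v) + (d+2)·(n − n_d(v))) ≤ x and the denominator is positive, then the closeness c(v) = (n−1)/f(v) satisfies c(v) ≤ x. -/

import Mathlib

open Finset

variable {V : Type*}

/-- `steps r n v w` : there is a walk of length `n` from `v` to `w` along relation `r`. -/
def steps (r : V → V → Prop) : ℕ → V → V → Prop
  | 0, v, w => v = w
  | n+1, v, w => ∃ u, r v u ∧ steps r n u w

/-- `w` is reachable from `v`. -/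
def reach (r : V → V → Prop) (v w : V) : Prop := ∃ n, steps r n v w

/-- shortest-path distance (number of edges). -/
noncomputable def ddist (r : V → V → Prop) (v w : V) : ℕ := sInf {n | steps r n v w}

open scoped Classical in
/-- set of vertices reachable from `v`. -/
noncomputable def Rset (r : V → V → Prop) [Fintype V] (v : V) : Finset V :=
  univ.filter (fun w => reach r v w)

/-- number of vertices reachable from `v`. -/
noncomputable def rnum (r : V → V → Prop) [Fintype V] (v : V) : ℕ := (Rset r v).card

/-- farness of `v`. -/
noncomputable def farn (r : V → V → Prop) [Fintype V] (v : V) : ℕ :=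
  ∑ w ∈ Rset r v, ddist r v w

open scoped Classical in
/-- ball of radius `d` around `v`. -/
noncomputable def ball (r : V → V → Prop) [Fintype V] (v : V) (d : ℕ) : Finset V :=
  univ.filter (fun w => reach r v w ∧ ddist r v w ≤ d)

/-- number of vertices at distance at most `d` from `v`. -/
noncomputable def nball (r : V → V → Prop) [Fintype V] (v : V) (d : ℕ) : ℕ := (ball r v d).card

open scoped Classical in
/-- set of vertices at distance exactly `d` from `v`. -/
noncomputable def sphere (r : V → V → Prop) [Fintype V] (v : V) (d : ℕ) : Finset V :=
  univ.filter (fun w => reach r v w ∧ ddist r v w = d)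

/-- number of vertices at distance exactly `d` from `v`. -/
noncomputable def gam (r : V → V → Prop) [Fintype V] (v : V) (d : ℕ) : ℕ := (sphere r v d).card

/-- farness of `v` restricted to distance at most `d`. -/
noncomputable def fd (r : V → V → Prop) [Fintype V] (v : V) (d : ℕ) : ℕ :=
  ∑ w ∈ ball r v d, ddist r v w

open scoped Classical in
/-- out-degree of `u`. -/
noncomputable def outdeg (r : V → V → Prop) [Fintype V] (u : V) : ℕ :=
  (univ.filter (fun w => r u w)).card

/-- `gtil r v d` = upper bound γ̃_{d+1}(v) = Σ_{u : dist(v,u)=d} outdeg(u). -/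
noncomputable def gtil (r : V → V → Prop) [Fintype V] (v : V) (d : ℕ) : ℕ :=
  ∑ u ∈ sphere r v d, outdeg r u

/-!
Every vertex outside the ball of radius `d` around `v` is at distance at least `d + 2`, except
those on the sphere of radius `d + 1`, which are at distance exactly `d + 1`. Each of the latter
is an out-neighbour of a vertex on the sphere of radius `d`, so there are at most `γ̃_{d+1}(v)`
of them. Hence `f(v) ≥ f_d(v) + (d + 2)(n - n_d(v)) - γ̃_{d+1}(v)`, and the closeness
`(n - 1) / f(v)` is at most the value of the cut-off bound.
-/

open scoped Classical

section Distance

variable {r : V → V → Prop}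

lemma steps_succ_iff' {n : ℕ} {v w : V} :
    steps r (n + 1) v w ↔ ∃ u, steps r n v u ∧ r u w := by
  induction n generalizing v with
  | zero =>
    constructor
    · rintro ⟨u, hvu, rfl⟩
      exact ⟨v, rfl, hvu⟩
    · rintro ⟨u, rfl, huw⟩
      exact ⟨w, huw, rfl⟩
  | succ n ih =>
    constructor
    · rintro ⟨u, hvu, hst⟩
      obtain ⟨u', hst', hu'w⟩ := ih.mp hst
      exact ⟨u', ⟨u, hvu, hst'⟩, hu'w⟩
    · rintro ⟨u, ⟨u', hvu', hst⟩, huw⟩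
      exact ⟨u', hvu', ih.mpr ⟨u, hst, huw⟩⟩

lemma steps_ddist {v w : V} (h : reach r v w) : steps r (ddist r v w) v w :=
  Nat.sInf_mem h

lemma ddist_le_of_steps {n : ℕ} {v w : V} (h : steps r n v w) : ddist r v w ≤ n :=
  Nat.sInf_le h

lemma ddist_le_ddist_add_one {v u w : V} (hu : reach r v u) (huw : r u w) :
    ddist r v w ≤ ddist r v u + 1 :=
  ddist_le_of_steps (steps_succ_iff'.mpr ⟨u, steps_ddist hu, huw⟩)

lemma exists_ddist_eq_of_ddist_eq_succ {v w : V} {d : ℕ} (hw : reach r v w)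
    (h : ddist r v w = d + 1) : ∃ u, reach r v u ∧ ddist r v u = d ∧ r u w := by
  obtain ⟨u, hvu, huw⟩ := steps_succ_iff'.mp (h ▸ steps_ddist hw)
  have hu : reach r v u := ⟨d, hvu⟩
  have hle : ddist r v u ≤ d := ddist_le_of_steps hvu
  have hge : ddist r v w ≤ ddist r v u + 1 := ddist_le_ddist_add_one hu huw
  exact ⟨u, hu, by omega, huw⟩

end Distance

section Counting

variable [Fintype V] (r : V → V → Prop)

lemma sphere_succ_subset_biUnion (v : V) (d : ℕ) :
    sphere r v (d + 1) ⊆ (sphere r v d).biUnion (fun u => univ.filter (r u ·)) := by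
  intro w hw
  simp only [sphere, mem_filter, mem_univ, true_and] at hw
  obtain ⟨u, hu, hud, huw⟩ := exists_ddist_eq_of_ddist_eq_succ hw.1 hw.2
  simp only [mem_biUnion, sphere, mem_filter, mem_univ, true_and]
  exact ⟨u, ⟨hu, hud⟩, huw⟩

lemma gam_succ_le_gtil (v : V) (d : ℕ) : gam r v (d + 1) ≤ gtil r v d :=
  (card_le_card (sphere_succ_subset_biUnion r v d)).trans card_biUnion_le

variable {r}

lemma mem_sphere_iff_ddist_eq (hsc : ∀ v w : V, reach r v w) {v w : V} {d : ℕ} :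
    w ∈ sphere r v d ↔ ddist r v w = d := by
  simp [sphere, hsc v w]

lemma mem_ball_iff_ddist_le (hsc : ∀ v w : V, reach r v w) {v w : V} {d : ℕ} :
    w ∈ ball r v d ↔ ddist r v w ≤ d := by
  simp [ball, hsc v w]

lemma fd_add_sum_compl_ball (hsc : ∀ v w : V, reach r v w) (v : V) (d : ℕ) :
    fd r v d + ∑ w ∈ (ball r v d)ᶜ, ddist r v w = farn r v := by
  have hR : Rset r v = univ := by
    ext w
    simp [Rset, hsc v w]
  rw [fd, farn, hR, sum_add_sum_compl]

lemma mul_card_compl_ball_le (hsc : ∀ v w : V, reach r v w) (v : V) (d : ℕ) :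
    (d + 2) * (Fintype.card V - nball r v d) ≤
      ∑ w ∈ (ball r v d)ᶜ, ddist r v w + gam r v (d + 1) := by
  set A := (ball r v d)ᶜ
  have hpoint : ∀ w ∈ A, d + 2 ≤ ddist r v w + if w ∈ sphere r v (d + 1) then 1 else 0 := by
    intro w hw
    rw [mem_compl, mem_ball_iff_ddist_le hsc] at hw
    split_ifs with hs <;> rw [mem_sphere_iff_ddist_eq hsc] at hs <;> omega
  have hcount : #(A.filter (· ∈ sphere r v (d + 1))) ≤ gam r v (d + 1) := by
    rw [filter_mem_eq_inter]
    exact card_le_card inter_subset_right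
  calc (d + 2) * (Fintype.card V - nball r v d)
      = ∑ _w ∈ A, (d + 2) := by rw [sum_const, card_compl, smul_eq_mul, mul_comm]; rfl
    _ ≤ ∑ w ∈ A, (ddist r v w + if w ∈ sphere r v (d + 1) then 1 else 0) := sum_le_sum hpoint
    _ = ∑ w ∈ A, ddist r v w + #(A.filter (· ∈ sphere r v (d + 1))) := by
      rw [sum_add_distrib, sum_boole, Nat.cast_id]
    _ ≤ ∑ w ∈ A, ddist r v w + gam r v (d + 1) := by omega

lemma fd_sub_gtil_add_le_farn (hsc : ∀ v w : V, reach r v w) (v : V) (d : ℕ) :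
    (fd r v d : ℝ) - gtil r v d + (d + 2) * ((Fintype.card V : ℝ) - nball r v d) ≤ farn r v := by
  have hnball : nball r v d ≤ Fintype.card V := card_le_univ _
  have hbound : fd r v d + (d + 2) * (Fintype.card V - nball r v d) ≤ farn r v + gtil r v d := by
    have := mul_card_compl_ball_le hsc v d
    have := gam_succ_le_gtil r v d
    have := fd_add_sum_compl_ball hsc v d
    omega
  have hboundR := (Nat.cast_le (α := ℝ)).mpr hbound
  push_cast [Nat.cast_sub hnball] at hboundR
  linarith

end Counting

theorem bfscut_correct_general [Fintype V] (r : V → V → Prop)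
    (hsc : ∀ v w : V, reach r v w) (x : ℝ) (v : V)
    (h : ∃ d : ℕ,
      0 < (fd r v d : ℝ) - (gtil r v d : ℝ)
          + (d + 2) * ((Fintype.card V : ℝ) - (nball r v d : ℝ)) ∧
      ((Fintype.card V : ℝ) - 1) /
          ((fd r v d : ℝ) - (gtil r v d : ℝ)
            + (d + 2) * ((Fintype.card V : ℝ) - (nball r v d : ℝ))) ≤ x) :
    ((Fintype.card V : ℝ) - 1) / (farn r v : ℝ) ≤ x := by
  obtain ⟨d, hpos, hle⟩ := h
  have hcard : (0 : ℝ) ≤ (Fintype.card V : ℝ) - 1 := by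
    have : 1 ≤ Fintype.card V := Fintype.card_pos_iff.mpr ⟨v⟩
    rw [sub_nonneg]
    exact_mod_cast this
  exact (div_le_div_of_nonneg_left hcard hpos (fd_sub_gtil_add_le_farn hsc v d)).trans hle

theorem bfscut_correct [Fintype V] (r : V → V → Prop)
    (hsc : ∀ v w : V, reach r v w) (hn : 2 ≤ Fintype.card V) (x : ℝ) (hx : 0 ≤ x) (v : V)
    (h : ∃ d : ℕ,
      0 < (fd r v d : ℝ) - (gtil r v d : ℝ)
          + (d + 2) * ((Fintype.card V : ℝ) - (nball r v d : ℝ)) ∧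
      ((Fintype.card V : ℝ) - 1) /
          ((fd r v d : ℝ) - (gtil r v d : ℝ)
            + (d + 2) * ((Fintype.card V : ℝ) - (nball r v d : ℝ))) ≤ x) :
    ((Fintype.card V : ℝ) - 1) / (farn r v : ℝ) ≤ x :=
  bfscut_correct_general r hsc x v h
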